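/- arXiv:1111.3387 — 3 statements merged into one kernel-verified Lean document; each statement's English description precedes it below -/
import Mathlib

section
/- Let H be a complex Hilbert space and T a bounded self-adjoint operator with 0 ≤ T ≤ I. For f ∈ H define f_N = (I - (I - T)^{N+1}) f. Then f_N converges in norm to f - P f, where P is the orthogonal projection onto ker T. -/
/-!
With `S = 1 - T` we have `0 ≤ S ≤ 1` in the Loewner order and the iterates are `f - S^(N+1) f`.
The numbers `a n = re ⟪S^n f, f⟫` decrease (`S^(n+1) ≤ S^n`) and are nonnegative, so they converge;
as `S` is self-adjoint, `‖S^m f - S^n f‖² = a (2m) - 2 a (m+n) + a (2n)`, hence `S^n f` is Cauchy.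
Its limit `y` is fixed by `S`, i.e. lies in `ker T`, and for `z ∈ ker T` the constant sequence
`⟪z, S^n f⟫ = ⟪S^n z, f⟫ = ⟪z, f⟫` shows `f - y ⊥ ker T`; so `y = P f`.
-/

open scoped InnerProductSpace
open Filter Topology

theorem cauchySeq_of_norm_sub_sq_eq {E : Type*} [SeminormedAddCommGroup E] {u : ℕ → E}
    {a : ℕ → ℝ} {L : ℝ} (ha : Tendsto a atTop (𝓝 L))
    (hu : ∀ m n, ‖u m - u n‖ ^ 2 = a (m + m) - 2 * a (m + n) + a (n + n)) : CauchySeq u := by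
  have hfst : Tendsto (fun p : ℕ × ℕ => p.1) atTop atTop :=
    tendsto_fst.mono_left (prod_atTop_atTop_eq (α := ℕ) (β := ℕ)).ge
  have hsnd : Tendsto (fun p : ℕ × ℕ => p.2) atTop atTop :=
    tendsto_snd.mono_left (prod_atTop_atTop_eq (α := ℕ) (β := ℕ)).ge
  have hsq : Tendsto (fun p : ℕ × ℕ => ‖u p.1 - u p.2‖ ^ 2) atTop (𝓝 (L - 2 * L + L)) := by
    simpa only [hu, Function.comp_def] using ((ha.comp (hfst.atTop_add_atTop hfst)).sub
      ((ha.comp (hfst.atTop_add_atTop hsnd)).const_mul 2)).add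
      (ha.comp (hsnd.atTop_add_atTop hsnd))
  rw [show L - 2 * L + L = 0 by ring] at hsq
  rw [cauchySeq_iff_tendsto_dist_atTop_0]
  simpa [dist_eq_norm, Real.sqrt_sq (norm_nonneg _)] using hsq.sqrt

namespace ContinuousLinearMap

variable {H : Type*} [NormedAddCommGroup H] [InnerProductSpace ℂ H] [CompleteSpace H]
  {S : H →L[ℂ] H}

lemma re_inner_pow_apply_self_antitone (h0 : 0 ≤ S) (h1 : S ≤ 1) (x : H) :
    Antitone fun n : ℕ => (⟪(S ^ n) x, x⟫_ℂ).re := fun _ _ hmn => by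
  simpa [inner_sub_left] using
    ((le_def _ _).1 (CStarAlgebra.pow_antitone h0 h1 hmn)).re_inner_nonneg_left x

lemma re_inner_pow_apply_self_nonneg (h0 : 0 ≤ S) (n : ℕ) (x : H) :
    0 ≤ (⟪(S ^ n) x, x⟫_ℂ).re :=
  ((nonneg_iff_isPositive _).1 (CStarAlgebra.pow_nonneg h0 n)).re_inner_nonneg_left x

lemma norm_pow_apply_sub_pow_apply_sq (hS : IsSelfAdjoint S) (m n : ℕ) (x : H) :
    ‖(S ^ m) x - (S ^ n) x‖ ^ 2 = (⟪(S ^ (m + m)) x, x⟫_ℂ).re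
      - 2 * (⟪(S ^ (m + n)) x, x⟫_ℂ).re + (⟪(S ^ (n + n)) x, x⟫_ℂ).re := by
  have h : ∀ k l : ℕ, ⟪(S ^ k) x, (S ^ l) x⟫_ℂ = ⟪(S ^ (k + l)) x, x⟫_ℂ := fun k l => by
    rw [← adjoint_inner_left (S ^ l), (hS.pow l).adjoint_eq, ← mul_apply_eq_comp, ← pow_add,
      add_comm]
  rw [norm_sub_sq (𝕜 := ℂ), ← inner_self_eq_norm_sq (𝕜 := ℂ), ← inner_self_eq_norm_sq (𝕜 := ℂ),
    h, h, h]
  rfl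

lemma cauchySeq_pow_apply (h0 : 0 ≤ S) (h1 : S ≤ 1) (x : H) :
    CauchySeq fun n : ℕ => (S ^ n) x :=
  cauchySeq_of_norm_sub_sq_eq
    (tendsto_atTop_ciInf (re_inner_pow_apply_self_antitone h0 h1 x)
      ⟨0, Set.forall_mem_range.2 fun n => re_inner_pow_apply_self_nonneg h0 n x⟩)
    (norm_pow_apply_sub_pow_apply_sq (IsSelfAdjoint.of_nonneg h0) · · x)

lemma inner_sub_eq_zero_of_tendsto_pow_apply (hS : IsSelfAdjoint S) {x y z : H}
    (hy : Tendsto (fun n : ℕ => (S ^ n) x) atTop (𝓝 y)) (hz : S z = z) :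
    ⟪z, x - y⟫_ℂ = 0 := by
  have hconst : ∀ n : ℕ, ⟪z, (S ^ n) x⟫_ℂ = ⟪z, x⟫_ℂ := fun n => by
    rw [← adjoint_inner_left (S ^ n), (hS.pow n).adjoint_eq, pow_apply_eq_iterate,
      Function.iterate_fixed hz]
  rw [inner_sub_right, sub_eq_zero]
  exact tendsto_nhds_unique tendsto_const_nhds ((tendsto_const_nhds.inner hy).congr hconst)

lemma le_one_of_re_inner_le (hS : IsSelfAdjoint S) (h : ∀ x, (⟪S x, x⟫_ℂ).re ≤ ‖x‖ ^ 2) :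
    S ≤ 1 := by
  refine (le_def _ _).2 ((isPositive_def').2 ⟨.sub (.one _) hS, fun x => ?_⟩)
  rw [reApplyInnerSelf_apply, sub_apply, one_apply_eq_self, inner_sub_left, map_sub,
    inner_self_eq_norm_sq]
  exact sub_nonneg.2 (h x)

lemma exists_tendsto_pow_apply (h0 : 0 ≤ S) (h1 : S ≤ 1) (x : H) :
    ∃ y, S y = y ∧ (∀ z, S z = z → ⟪z, x - y⟫_ℂ = 0) ∧
      Tendsto (fun n : ℕ => (S ^ n) x) atTop (𝓝 y) := by
  obtain ⟨y, hy⟩ := cauchySeq_tendsto_of_complete (cauchySeq_pow_apply h0 h1 x)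
  refine ⟨y, ?_, fun z hz => inner_sub_eq_zero_of_tendsto_pow_apply h0.isSelfAdjoint hy hz, hy⟩
  exact isFixedPt_of_tendsto_iterate (by simpa only [pow_apply_eq_iterate] using hy)
    S.continuous.continuousAt

end ContinuousLinearMap

theorem Submodule.eq_of_sub_mem_orthogonal {𝕜 E : Type*} [RCLike 𝕜] [NormedAddCommGroup E]
    [InnerProductSpace 𝕜 E] {K : Submodule 𝕜 E} {x y y' : E} (hy : y ∈ K) (hy' : y' ∈ K)
    (hxy : x - y ∈ Kᗮ) (hxy' : x - y' ∈ Kᗮ) : y = y' := by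
  have h : y - y' ∈ K ⊓ Kᗮ :=
    ⟨K.sub_mem hy hy', sub_sub_sub_cancel_left y' y x ▸ Kᗮ.sub_mem hxy' hxy⟩
  rwa [K.inf_orthogonal_eq_bot, Submodule.mem_bot, sub_eq_zero] at h

open ContinuousLinearMap in
/-- Consistency of the unfolding iteration: the iterates
`f_N = (I - (I - T)^{N+1}) f` converge in norm to `f - P f`, where `P` is the
orthogonal projection onto `ker T`. -/
theorem unfolding_iteration_tendsto
    {H : Type*} [NormedAddCommGroup H] [InnerProductSpace ℂ H] [CompleteSpace H]
    (T : H →L[ℂ] H) (hT : IsSelfAdjoint T)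
    (hpos : ∀ x : H, 0 ≤ (⟪T x, x⟫_ℂ).re)
    (hle : ∀ x : H, (⟪T x, x⟫_ℂ).re ≤ ‖x‖ ^ 2)
    (P : H →L[ℂ] H)
    (hPmem : ∀ x : H, P x ∈ LinearMap.ker (T : H →ₗ[ℂ] H))
    (hPorth : ∀ x : H, x - P x ∈ (LinearMap.ker (T : H →ₗ[ℂ] H))ᗮ)
    (f : H) :
    Tendsto (fun N : ℕ => (1 - (1 - T) ^ (N + 1)) f) atTop (nhds (f - P f)) := by
  have hS0 : 0 ≤ 1 - T := sub_nonneg.2 (le_one_of_re_inner_le hT hle)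
  have hS1 : 1 - T ≤ 1 :=
    sub_le_self _ ((nonneg_iff_isPositive T).2 (isPositive_def'.2 ⟨hT, hpos⟩))
  have hker : ∀ z, z ∈ LinearMap.ker (T : H →ₗ[ℂ] H) ↔ (1 - T) z = z := by
    simp [sub_eq_self]
  obtain ⟨y, hy_fix, hy_orth, hy⟩ := exists_tendsto_pow_apply hS0 hS1 f
  obtain rfl : y = P f := Submodule.eq_of_sub_mem_orthogonal ((hker y).2 hy_fix) (hPmem f)
    ((Submodule.mem_orthogonal _ _).2 fun z hz => hy_orth z ((hker z).1 hz)) (hPorth f)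
  simpa using tendsto_const_nhds.sub (hy.comp (tendsto_add_atTop_nat 1))
end

section
/- Let H be a complex Hilbert space, T bounded self-adjoint with 0 ≤ T ≤ I, and e ∈ H. Define the propagated systematic error δf_N = ∑_{k=0}^{N} (I-T)^k e. Then ‖T δf_N‖ ≤ (∑_{k=0}^{N} 1/(k+1)) ‖e‖ = (Ψ(N+2)+γ) ‖e‖. -/
/-!
Since `T (∑ₖ (1 - T)ᵏ e) = ∑ₖ T (1 - T)ᵏ e`, it suffices to bound `‖T (1 - T)ᵏ‖ ≤ 1 / (k + 1)`.
The form conditions say `0 ≤ T ≤ 1`, so the spectrum of `T` lies in `[0, 1]`, and by the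
continuous functional calculus `‖T (1 - T)ᵏ‖` is at most the supremum of `λ (1 - λ)ᵏ` there.
That supremum is at most `1 / (k + 1)` by the Bernoulli-type inequality `(1 - λ)ᵏ (1 + k λ) ≤ 1`.
-/

open scoped InnerProductSpace

theorem one_sub_pow_mul_one_add_mul_le_one {t : ℝ} (h1 : t ≤ 1) (k : ℕ) :
    (1 - t) ^ k * (1 + k * t) ≤ 1 := by
  induction k with
  | zero => simp
  | succ k ih =>
    have hpow : 0 ≤ (1 - t) ^ k := pow_nonneg (by linarith) k
    calc (1 - t) ^ (k + 1) * (1 + (k + 1 : ℕ) * t)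
        = (1 - t) ^ k * (1 + k * t) - (1 - t) ^ k * ((k + 1) * t ^ 2) := by push_cast; ring
      _ ≤ (1 - t) ^ k * (1 + k * t) := sub_le_self _ (mul_nonneg hpow (by positivity))
      _ ≤ 1 := ih

theorem mul_one_sub_pow_le_inv_succ {t : ℝ} (h1 : t ≤ 1) (k : ℕ) :
    t * (1 - t) ^ k ≤ 1 / ((k : ℝ) + 1) := by
  rw [le_div_iff₀ (by positivity)]
  calc t * (1 - t) ^ k * (k + 1) = (1 - t) ^ k * (t * (k + 1)) := by ring
    _ ≤ (1 - t) ^ k * (1 + k * t) := by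
        gcongr
        linarith
    _ ≤ 1 := one_sub_pow_mul_one_add_mul_le_one h1 k

theorem norm_mul_one_sub_pow_le {A : Type*} [CStarAlgebra A] [PartialOrder A] [StarOrderedRing A]
    {a : A} (ha₀ : 0 ≤ a) (ha₁ : a ≤ 1) (k : ℕ) :
    ‖a * (1 - a) ^ k‖ ≤ 1 / ((k : ℝ) + 1) := by
  have ha : IsSelfAdjoint a := ha₀.isSelfAdjoint
  have hcfc : cfc (fun x : ℝ => x * (1 - x) ^ k) a = a * (1 - a) ^ k := by
    rw [cfc_mul _ _ a, cfc_pow (fun x : ℝ => 1 - x) k a, cfc_sub _ _ a, cfc_const_one ℝ a, cfc_id' ℝ a]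
  rw [← hcfc]
  refine norm_cfc_le (by positivity) fun x hx => ?_
  have hx₀ : 0 ≤ x := spectrum_nonneg_of_nonneg ha₀ hx
  have hx₁ : x ≤ 1 := (CFC.le_one_iff a).mp ha₁ x hx
  rw [Real.norm_of_nonneg (mul_nonneg hx₀ (pow_nonneg (by linarith) k))]
  exact mul_one_sub_pow_le_inv_succ hx₁ k

namespace ContinuousLinearMap

variable {𝕜 H : Type*} [RCLike 𝕜] [NormedAddCommGroup H] [InnerProductSpace 𝕜 H]
  [CompleteSpace H]

theorem nonneg_of_re_inner_nonneg {T : H →L[𝕜] H} (hT : IsSelfAdjoint T)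
    (hpos : ∀ x : H, 0 ≤ RCLike.re ⟪T x, x⟫_𝕜) : 0 ≤ T :=
  (nonneg_iff_isPositive T).mpr ⟨hT.isSymmetric, hpos⟩

theorem le_one_of_re_inner_le_norm_sq {T : H →L[𝕜] H} (hT : IsSelfAdjoint T)
    (hle : ∀ x : H, RCLike.re ⟪T x, x⟫_𝕜 ≤ ‖x‖ ^ 2) : T ≤ 1 := by
  refine (le_def _ _).mpr ⟨(IsSelfAdjoint.one _).sub hT |>.isSymmetric, fun x => ?_⟩
  rw [reApplyInnerSelf_apply, sub_apply, inner_sub_left, map_sub, one_apply_eq_self, inner_self_eq_norm_sq]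
  exact sub_nonneg.mpr (hle x)

end ContinuousLinearMap

/-- Systematic error bound: `‖T ∑_{k=0}^{N} (I-T)^k e‖ ≤ (∑_{k=0}^{N} 1/(k+1)) ‖e‖`
for a bounded self-adjoint `T` with `0 ≤ T ≤ I`. -/
theorem unfolding_systematic_bound
    {H : Type*} [NormedAddCommGroup H] [InnerProductSpace ℂ H] [CompleteSpace H]
    (T : H →L[ℂ] H) (hT : IsSelfAdjoint T)
    (hpos : ∀ x : H, 0 ≤ (⟪T x, x⟫_ℂ).re)
    (hle : ∀ x : H, (⟪T x, x⟫_ℂ).re ≤ ‖x‖ ^ 2)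
    (e : H) :
    ∀ N : ℕ, ‖T (∑ k ∈ Finset.range (N + 1), ((1 - T) ^ k) e)‖ ≤
      (∑ k ∈ Finset.range (N + 1), 1 / ((k : ℝ) + 1)) * ‖e‖ := by
  intro N
  have hT₀ := T.nonneg_of_re_inner_nonneg hT hpos
  have hT₁ := T.le_one_of_re_inner_le_norm_sq hT hle
  calc ‖T (∑ k ∈ Finset.range (N + 1), ((1 - T) ^ k) e)‖
      = ‖∑ k ∈ Finset.range (N + 1), (T * (1 - T) ^ k) e‖ := by
        simp only [map_sum, mul_apply_eq_comp]
    _ ≤ ∑ k ∈ Finset.range (N + 1), ‖T * (1 - T) ^ k‖ * ‖e‖ :=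
        norm_sum_le_of_le _ fun k _ => (T * (1 - T) ^ k).le_opNorm e
    _ ≤ ∑ k ∈ Finset.range (N + 1), 1 / ((k : ℝ) + 1) * ‖e‖ := by
        gcongr with k
        exact norm_mul_one_sub_pow_le hT₀ hT₁ k
    _ = (∑ k ∈ Finset.range (N + 1), 1 / ((k : ℝ) + 1)) * ‖e‖ := (Finset.sum_mul ..).symm
end

section
/- For a bounded self-adjoint operator T with 0 ≤ T ≤ I on a complex Hilbert space and any vector e in the closure of the range of T, the sequence ∑_{k=0}^{N} (I-T)^k T e converges in norm to e - P e = e as N → ∞ (where P is the projection onto ker T, so P e = 0). -/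
/-!
Write `S = 1 - T`. From `0 ≤ T ≤ 1` one gets `‖T z‖² ≤ re ⟪T z, z⟫`, hence
`‖T z‖² + ‖S z‖² ≤ ‖z‖²`. Taking `z = Sⁿ x`, the square `‖Sⁿ (T x)‖²` is bounded by the
decrement `‖Sⁿ x‖² - ‖Sⁿ⁺¹ x‖²`, so these squares are summable and `Sⁿ (T x) → 0`. The `Sⁿ` are
contractions, so `Sⁿ e → 0` on the whole closure of the range of `T`, and the partial sums
telescope to `e - Sᴺ⁺¹ e`. Finally, for symmetric `T` the closure of the range is `(ker T)ᗮ`,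
so `P e ∈ ker T ∩ (ker T)ᗮ = 0`.
-/

open scoped InnerProductSpace
open Filter

namespace ContinuousLinearMap.IsPositive

open RCLike Topology Finset

variable {𝕜 E : Type*} [RCLike 𝕜] [NormedAddCommGroup E] [InnerProductSpace 𝕜 E]
  {T : E →L[𝕜] E}

theorem norm_apply_sq_le_re_inner_apply_self (hT : T.IsPositive) (h1T : (1 - T).IsPositive)
    (z : E) : ‖T z‖ ^ 2 ≤ re ⟪T z, z⟫_𝕜 := by
  have h₁ := hT.re_inner_nonneg_left ((1 - T) z)
  have h₂ := h1T.re_inner_nonneg_left (T z)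
  simp only [sub_apply, one_apply_eq_self, map_sub, inner_sub_left, inner_sub_right,
    hT.inner_left_eq_inner_right (T z) z, inner_self_eq_norm_sq] at h₁ h₂
  linarith

theorem norm_apply_sq_add_norm_one_sub_apply_sq_le (hT : T.IsPositive)
    (h1T : (1 - T).IsPositive) (z : E) : ‖T z‖ ^ 2 + ‖(1 - T) z‖ ^ 2 ≤ ‖z‖ ^ 2 := by
  have h := hT.norm_apply_sq_le_re_inner_apply_self h1T z
  rw [sub_apply, one_apply_eq_self, @norm_sub_sq 𝕜, inner_re_symm]
  linarith

theorem tendsto_one_sub_pow_apply_apply (hT : T.IsPositive) (h1T : (1 - T).IsPositive)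
    (x : E) : Tendsto (fun n => ((1 - T : E →L[𝕜] E) ^ n) (T x)) atTop (𝓝 0) := by
  set S : E →L[𝕜] E := 1 - T
  have hcomm (n : ℕ) : (S ^ n) (T x) = T ((S ^ n) x) :=
    congr($((((Commute.one_left T).sub_left (Commute.refl T)).pow_left n).eq) x)
  have hstep (n : ℕ) : ‖(S ^ n) (T x)‖ ^ 2 ≤ ‖(S ^ n) x‖ ^ 2 - ‖(S ^ (n + 1)) x‖ ^ 2 := by
    have := hT.norm_apply_sq_add_norm_one_sub_apply_sq_le h1T ((S ^ n) x)
    rw [hcomm, pow_succ' S n, mul_apply_eq_comp]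
    linarith
  have hsumm : Summable fun n => ‖(S ^ n) (T x)‖ ^ 2 := by
    refine summable_of_sum_range_le (c := ‖x‖ ^ 2) (fun n => by positivity) fun N => ?_
    calc ∑ n ∈ range N, ‖(S ^ n) (T x)‖ ^ 2
        ≤ ∑ n ∈ range N, (‖(S ^ n) x‖ ^ 2 - ‖(S ^ (n + 1)) x‖ ^ 2) :=
          sum_le_sum fun n _ => hstep n
      _ = ‖x‖ ^ 2 - ‖(S ^ N) x‖ ^ 2 := by rw [sum_range_sub', pow_zero, one_apply_eq_self]
      _ ≤ ‖x‖ ^ 2 := sub_le_self _ (sq_nonneg _)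
  rw [tendsto_zero_iff_norm_tendsto_zero]
  simpa using hsumm.tendsto_atTop_zero.sqrt

theorem tendsto_one_sub_pow_apply_of_mem_closure_range (hT : T.IsPositive)
    (h1T : (1 - T).IsPositive) {e : E} (he : e ∈ closure (Set.range T)) :
    Tendsto (fun n => ((1 - T : E →L[𝕜] E) ^ n) e) atTop (𝓝 0) := by
  have hlip : LipschitzWith 1 (1 - T : E →L[𝕜] E) := by
    refine LipschitzWith.of_dist_le_mul fun x y => ?_
    rw [dist_eq_norm, dist_eq_norm, ← map_sub, NNReal.coe_one, one_mul]
    have := hT.norm_apply_sq_add_norm_one_sub_apply_sq_le h1T (x - y)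
    exact (sq_le_sq₀ (norm_nonneg _) (norm_nonneg _)).mp (by linarith [sq_nonneg ‖T (x - y)‖])
  have hequi : Equicontinuous fun n : ℕ => ⇑((1 - T : E →L[𝕜] E) ^ n) :=
    (LipschitzWith.uniformEquicontinuous _ 1 fun n => by
      simpa [funext (pow_apply_eq_iterate _ n)] using hlip.iterate n).equicontinuous
  refine closure_minimal (?_ : Set.range T ⊆ _) (hequi.isClosed_setOfPred_tendsto
    (f := fun _ => 0) continuous_const) he
  rintro _ ⟨x, rfl⟩
  exact hT.tendsto_one_sub_pow_apply_apply h1T x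

end ContinuousLinearMap.IsPositive

open ContinuousLinearMap in
/-- Neumann-series-type convergence: for `e` in the closure of the range of `T`
(so that `P e = 0` for the orthogonal projection `P` onto `ker T`), the partial
sums `∑_{k=0}^{N} (I-T)^k T e` converge in norm to `e - P e = e`. -/
theorem unfolding_neumann_tendsto
    {H : Type*} [NormedAddCommGroup H] [InnerProductSpace ℂ H] [CompleteSpace H]
    (T : H →L[ℂ] H) (hT : IsSelfAdjoint T)
    (hpos : ∀ x : H, 0 ≤ (⟪T x, x⟫_ℂ).re)
    (hle : ∀ x : H, (⟪T x, x⟫_ℂ).re ≤ ‖x‖ ^ 2)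
    (P : H →L[ℂ] H)
    (hPmem : ∀ x : H, P x ∈ LinearMap.ker (T : H →ₗ[ℂ] H))
    (hPorth : ∀ x : H, x - P x ∈ (LinearMap.ker (T : H →ₗ[ℂ] H))ᗮ)
    (e : H) (he : e ∈ (LinearMap.range (T : H →ₗ[ℂ] H)).topologicalClosure) :
    P e = 0 ∧
      Tendsto (fun N : ℕ => ∑ k ∈ Finset.range (N + 1), ((1 - T) ^ k) (T e))
        atTop (nhds (e - P e)) := by
  have hTpos : T.IsPositive := isPositive_def'.2 ⟨hT, hpos⟩
  have h1Tpos : (1 - T).IsPositive := isPositive_def'.2 ⟨(IsSelfAdjoint.one _).sub hT, fun x => by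
    have := hle x
    rw [reApplyInnerSelf, sub_apply, one_apply_eq_self, inner_sub_left, map_sub,
      inner_self_eq_norm_sq, RCLike.re_to_complex]
    linarith⟩
  have hPe : P e = 0 := by
    rw [← Submodule.orthogonal_orthogonal_eq_closure, hT.isSymmetric.orthogonal_range] at he
    have hPe_orth : P e ∈ (LinearMap.ker (T : H →ₗ[ℂ] H))ᗮ := by
      simpa using Submodule.sub_mem _ he (hPorth e)
    simpa [Submodule.inf_orthogonal_eq_bot] using Submodule.mem_inf.2 ⟨hPmem e, hPe_orth⟩
  refine ⟨hPe, ?_⟩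
  have htelescope (N : ℕ) :
      ∑ k ∈ Finset.range (N + 1), ((1 - T) ^ k) (T e) = e - ((1 - T) ^ (N + 1)) e := by
    simpa only [sub_sub_cancel, sum_apply, mul_apply_eq_comp, sub_apply, one_apply_eq_self] using
      congr($(geom_sum_mul_neg (1 - T) (N + 1)) e)
  have hclosure : e ∈ closure (Set.range T) := by
    rwa [← SetLike.mem_coe, Submodule.topologicalClosure_coe, LinearMap.coe_range] at he
  rw [hPe, sub_zero]
  simp_rw [htelescope]
  simpa only [Function.comp_def, sub_zero] using tendsto_const_nhds.sub <|
    (hTpos.tendsto_one_sub_pow_apply_of_mem_closure_range h1Tpos hclosure).comp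
      (tendsto_add_atTop_nat 1)
end
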